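/- For every real μ > 0, the mean of the load distribution satisfies ∑_{l=0}^{∞} l · (3.5^{3.5}/l!) · (Γ(l+4.5)/Γ(3.5)) · μ^{l} · (3.5+μ)^{−(l+4.5)} = (9/7)·μ; consequently the mean load (the mean number of users served by the tagged BS, including the tagged user) equals ∑_{l=0}^{∞} (l+1) · (3.5^{3.5}/l!) · (Γ(l+4.5)/Γ(3.5)) · μ^{l} · (3.5+μ)^{−(l+4.5)} = 1 + (9/7)·μ. -/

import Mathlib

open Real Polynomial Nat

/-!
The weights `P_L(L = l+1)` form a negative binomial law with real shape `s = 4.5` and parameter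
`p = μ / (3.5 + μ)`. The negative binomial series `∑ Γ(n+s)/(Γ(s) n!) pⁿ = (1-p)^(-s)` shows that
they sum to 1, and the shift `n · NB(s,p)(n) = s p/(1-p) · NB(s+1,p)(n-1)` gives the mean
`s p/(1-p) = 4.5 μ / 3.5 = 9μ/7`.
-/

theorem Real.Gamma_add_nat_div_Gamma_eq {s : ℝ} (hs : ∀ k : ℕ, s ≠ -k) (n : ℕ) :
    Gamma (s + n) / Gamma s = (ascPochhammer ℝ n).eval s := by
  induction n with
  | zero => simp [div_self (Gamma_ne_zero hs)]
  | succ n ih =>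
    have hsn : s + n ≠ 0 := fun h => hs n (by linarith)
    rw [ascPochhammer_succ_eval, ← ih, Nat.cast_succ, ← add_assoc, Gamma_add_one hsn]
    ring

theorem Ring.choose_add_nat_sub_one_eq_Gamma {s : ℝ} (hs : ∀ k : ℕ, s ≠ -k) (n : ℕ) :
    Ring.choose (s + n - 1) n = Gamma (n + s) / (Gamma s * n !) := by
  rw [Ring.choose_eq_smul, descPochhammer_smeval_eq_ascPochhammer,
    show s + n - 1 - n + 1 = s by ring, ascPochhammer_smeval_cast, ascPochhammer_smeval_eq_eval,
    ← Real.Gamma_add_nat_div_Gamma_eq hs, add_comm, smul_eq_mul]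
  field_simp

theorem Real.hasSum_Gamma_div_mul_pow {s x : ℝ} (hs : ∀ k : ℕ, s ≠ -k) (hx : |x| < 1) :
    HasSum (fun n : ℕ => Gamma (n + s) / (Gamma s * n !) * x ^ n) ((1 - x) ^ (-s)) := by
  have h := (one_div_one_sub_rpow_hasFPowerSeriesOnBall_zero s).hasSum
    (y := x) (by simpa [enorm_eq_nnnorm, ← NNReal.coe_lt_coe] using hx)
  simp only [FormalMultilinearSeries.ofScalars_apply_eq, smul_eq_mul, zero_add,
    Ring.choose_add_nat_sub_one_eq_Gamma hs] at h
  rwa [rpow_neg (by linarith [le_abs_self x]), ← one_div]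

noncomputable def negBinomialPMF (s p : ℝ) (n : ℕ) : ℝ :=
  Gamma (n + s) / (Gamma s * n !) * p ^ n * (1 - p) ^ s

section NegBinomial

variable {s p : ℝ}

theorem hasSum_negBinomialPMF (hs : ∀ k : ℕ, s ≠ -k) (hp : |p| < 1) :
    HasSum (negBinomialPMF s p) 1 := by
  have hp1 : 0 < 1 - p := by linarith [le_abs_self p]
  have h := (hasSum_Gamma_div_mul_pow hs hp).mul_right ((1 - p) ^ s)
  rwa [rpow_neg hp1.le, inv_mul_cancel₀ (rpow_pos_of_pos hp1 s).ne'] at h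

theorem succ_mul_negBinomialPMF_succ (hs : s ≠ 0) (hp : p < 1) (m : ℕ) :
    ((m : ℝ) + 1) * negBinomialPMF s p (m + 1) = s * p / (1 - p) * negBinomialPMF (s + 1) p m := by
  have hp1 : 0 < 1 - p := by linarith
  simp only [negBinomialPMF, Gamma_add_one hs, rpow_add hp1, rpow_one, factorial_succ,
    Nat.cast_mul, Nat.cast_succ, pow_succ, show (m : ℝ) + 1 + s = m + (s + 1) by ring]
  field_simp

theorem hasSum_mul_negBinomialPMF (hs : ∀ k : ℕ, s ≠ -k) (hp : |p| < 1) :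
    HasSum (fun n : ℕ => n * negBinomialPMF s p n) (s * p / (1 - p)) := by
  have hs1 : ∀ k : ℕ, s + 1 ≠ -k := fun k h => hs (k + 1) (by push_cast; linarith)
  have h := (hasSum_negBinomialPMF hs1 hp).mul_left (s * p / (1 - p))
  rw [mul_one] at h
  rw [← hasSum_nat_add_iff' 1]
  simp only [Finset.sum_range_one, Nat.cast_zero, zero_mul, sub_zero, Nat.cast_add, Nat.cast_one]
  exact h.congr_fun (succ_mul_negBinomialPMF_succ (by simpa using hs 0) (abs_lt.mp hp).2)

end NegBinomial

/-- The paper's `P_L(L = l+1)`, with its fitted constant `3.5` replaced by `c`. -/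
noncomputable def loadPMF (c μ : ℝ) (l : ℕ) : ℝ :=
  c ^ c / l ! * (Gamma (l + (c + 1)) / Gamma c) * μ ^ l * (c + μ) ^ (-((l : ℝ) + (c + 1)))

section Load

variable {c μ : ℝ}

theorem loadPMF_eq_negBinomialPMF (hc : 0 < c) (hμ : 0 ≤ μ) (l : ℕ) :
    loadPMF c μ l = negBinomialPMF (c + 1) (μ / (c + μ)) l := by
  have hcμ : 0 < c + μ := by positivity
  rw [loadPMF, negBinomialPMF, Gamma_add_one hc.ne', one_sub_div hcμ.ne', add_sub_cancel_right,
    div_rpow hc.le hcμ.le, rpow_add_one hc.ne', rpow_neg hcμ.le, rpow_add hcμ, rpow_natCast, div_pow]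
  field_simp

theorem abs_div_add_lt_one (hc : 0 < c) (hμ : 0 ≤ μ) : |μ / (c + μ)| < 1 := by
  rw [abs_of_nonneg (by positivity), div_lt_one (by positivity)]
  linarith

theorem hasSum_loadPMF (hc : 0 < c) (hμ : 0 ≤ μ) : HasSum (loadPMF c μ) 1 := by
  rw [funext (loadPMF_eq_negBinomialPMF hc hμ)]
  exact hasSum_negBinomialPMF (fun k => by linarith [k.cast_nonneg (α := ℝ)])
    (abs_div_add_lt_one hc hμ)

theorem hasSum_mul_loadPMF (hc : 0 < c) (hμ : 0 ≤ μ) :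
    HasSum (fun l : ℕ => l * loadPMF c μ l) ((c + 1) / c * μ) := by
  have hcμ : 0 < c + μ := by positivity
  have h := hasSum_mul_negBinomialPMF (s := c + 1) (fun k => by linarith [k.cast_nonneg (α := ℝ)])
      (abs_div_add_lt_one hc hμ)
  rw [one_sub_div hcμ.ne', add_sub_cancel_right] at h
  convert h using 1
  · simp only [loadPMF_eq_negBinomialPMF hc hμ]
  · field_simp

end Load

/-- The mean of the load distribution: `∑ l · P_L(l+1) = (9/7) μ`, and consequently the
mean load `∑ (l+1) · P_L(l+1) = 1 + (9/7) μ`. -/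
theorem load_pmf_mean (μ : ℝ) (hμ : 0 < μ) :
    (∑' l : ℕ,
        (l : ℝ) * ((3.5 ^ (3.5 : ℝ) / (l.factorial : ℝ)) *
          (Real.Gamma ((l : ℝ) + 4.5) / Real.Gamma 3.5) *
          μ ^ l * (3.5 + μ) ^ (-((l : ℝ) + 4.5))) = (9 / 7) * μ) ∧
    (∑' l : ℕ,
        ((l : ℝ) + 1) * ((3.5 ^ (3.5 : ℝ) / (l.factorial : ℝ)) *
          (Real.Gamma ((l : ℝ) + 4.5) / Real.Gamma 3.5) *
          μ ^ l * (3.5 + μ) ^ (-((l : ℝ) + 4.5))) = 1 + (9 / 7) * μ) := by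
  have hP : ∀ l : ℕ, 3.5 ^ (3.5 : ℝ) / (l.factorial : ℝ) *
      (Real.Gamma ((l : ℝ) + 4.5) / Real.Gamma 3.5) * μ ^ l * (3.5 + μ) ^ (-((l : ℝ) + 4.5))
      = loadPMF 3.5 μ l := fun l => by
    rw [loadPMF, show (3.5 : ℝ) + 1 = 4.5 by norm_num]
  simp only [hP]
  have hmean := hasSum_mul_loadPMF (c := 3.5) (by norm_num) hμ.le
  rw [show ((3.5 : ℝ) + 1) / 3.5 = 9 / 7 by norm_num] at hmean
  refine ⟨hmean.tsum_eq, ?_⟩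
  rw [add_comm, tsum_congr fun l : ℕ => add_one_mul (l : ℝ) (loadPMF 3.5 μ l)]
  exact (hmean.add (hasSum_loadPMF (by norm_num) hμ.le)).tsum_eq
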